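/- Let S = (S⁻, G) and T = (T⁻, F) be recursive causal teams over σ with S⁻ and T⁻ nonempty. Then S ⊨^c Θ^T ∧ Φ^F if and only if there exists a causal team R over σ with S ≈ R and R a causal subteam of T (i.e. R has function component F and R⁻ ⊆ T⁻). -/

import Mathlib

/-!
`Θ^T` is a tensor disjunction of complete state descriptions, so it holds in `S` exactly when
`S⁻ ⊆ T⁻`. Every conjunct of `Φ^F` is flat and concerns one variable `v` and the intervention
`𝐖_v = t` on all other variables: `η(v)` says that `v` then takes the value `F_v(t)`, `ξ(v)` that
it keeps its value. At an assignment compatible with both `G` and `F` these two requirements hold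
iff `v` is a non-constant endogenous variable of `G` exactly when it is one of `F`, and then `G_v`
and `F_v` agree as functions of all variables, which is `G_v ∼ F_v`. Once `S⁻ ⊆ T⁻`, every
`s ∈ S⁻` is compatible with `F`, so for nonempty `S⁻` we get `S ⊨ Φ^F ↔ G ∼ F`, and
`R = (S⁻, F)` is the required subteam.
-/

open scoped Classical
set_option linter.unusedSectionVars false

noncomputable section

/-- Assignments of values to variables. -/
abbrev Asg (V : Type) (Val : V → Type) : Type := (v : V) → Val v

/-- A recursive system of functions over the signature `(V, Val)`:
each endogenous variable `v ∈ En` has a parent set `pa v` and a function `fn v`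
computing its value from the values of its parents; recursiveness says that the
induced causal graph is acyclic. -/
structure Sys (V : Type) (Val : V → Type) : Type where
  En : Finset V
  pa : V → Finset V
  fn : (v : V) → ((w : V) → w ∈ pa v → Val w) → Val v
  recursive : ∀ x : V, ¬ Relation.TransGen (fun a b => b ∈ En ∧ a ∈ pa b) x x

variable {V : Type} [Fintype V] [DecidableEq V] [Nonempty V]
  {Val : V → Type} [∀ v, Fintype (Val v)] [∀ v, DecidableEq (Val v)] [∀ v, Nonempty (Val v)]

namespace CausalTeam

/-- The edge relation of the causal graph of a system of functions. -/
@[reducible] def Edge (F : Sys V Val) (a b : V) : Prop := b ∈ F.En ∧ a ∈ F.pa b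

theorem wfEdge (F : Sys V Val) : WellFounded (Edge F) := by
  have h2 : WellFounded (Relation.TransGen (Edge F)) := by
    have hirr : IsIrrefl V (Relation.TransGen (Edge F)) := ⟨F.recursive⟩
    have htr : IsTrans V (Relation.TransGen (Edge F)) :=
      ⟨fun _ _ _ h h' => Relation.TransGen.trans h h'⟩
    exact Finite.wellFounded_of_trans_of_irrefl _
  exact Subrelation.wf (fun h => Relation.TransGen.single h) h2

/-- An assignment is compatible with a system of functions if every endogenous
variable takes the value prescribed by its function. -/
def Compat (F : Sys V Val) (s : Asg V Val) : Prop :=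
  ∀ v ∈ F.En, s v = F.fn v (fun w _ => s w)

/-- The variables occurring in a conjunction of equations `𝐗 = 𝐱`. -/
def ikeys (I : List ((v : V) × Val v)) : List V := I.map Sigma.fst

/-- A conjunction of equations is consistent if it contains no pair `X = x`, `X = x'`
with distinct values `x ≠ x'`. -/
def IConsistent (I : List ((v : V) × Val v)) : Prop :=
  ∀ p ∈ I, ∀ q ∈ I, p.1 = q.1 → p = q

/-- Look up the (first) value assigned to a variable by a conjunction of equations. -/
def ilookup : List ((v : V) × Val v) → (v : V) → Option (Val v)
  | [], _ => none
  | p :: I, v => if h : p.1 = v then some (h ▸ p.2) else ilookup I v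

/-- The intervened system of functions `F_{𝐗=𝐱}`: the restriction of `F` to `En(F) ∖ 𝐗`. -/
def doSys (F : Sys V Val) (I : List ((v : V) × Val v)) : Sys V Val where
  En := F.En.filter (fun v => v ∉ ikeys I)
  pa := F.pa
  fn := F.fn
  recursive := by
    intro x hx
    refine F.recursive x (Relation.TransGen.mono ?_ x x hx)
    intro a b hab
    exact ⟨(Finset.mem_filter.mp hab.1).1, hab.2⟩

/-- The intervened assignment `s_{𝐗=𝐱}`: variables in `𝐗` get the prescribed values,
exogenous variables outside `𝐗` keep their values, and endogenous variables outside `𝐗`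
are recomputed (recursively) by their functions. -/
def doAsg (F : Sys V Val) (I : List ((v : V) × Val v)) (s : Asg V Val) : Asg V Val :=
  (wfEdge F).fix (C := fun v => Val v) fun v ih =>
    match ilookup I v with
    | some x => x
    | none => if h : v ∈ F.En then F.fn v (fun w hw => ih w ⟨h, hw⟩) else s v

/-- Formulas of the languages CO[σ], CO⩗[σ] and COD[σ]:
equations `X = x`, dependence atoms `=(𝐗;Y)`, negation, conjunction,
tensor disjunction `∨`, intuitionistic disjunction `⩗`, and counterfactuals `𝐗=𝐱 □→ φ`. -/
inductive Fml (V : Type) (Val : V → Type) : Type where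
  | eq : (v : V) → Val v → Fml V Val
  | dep : List V → V → Fml V Val
  | neg : Fml V Val → Fml V Val
  | and : Fml V Val → Fml V Val → Fml V Val
  | or : Fml V Val → Fml V Val → Fml V Val
  | ior : Fml V Val → Fml V Val → Fml V Val
  | cf : List ((v : V) × Val v) → Fml V Val → Fml V Val

/-- CO[σ]-formulas: equations, closed under ¬, ∧, ∨ and counterfactuals. -/
inductive IsCO : Fml V Val → Prop where
  | eq (v : V) (x : Val v) : IsCO (Fml.eq v x)
  | neg {φ} : IsCO φ → IsCO (Fml.neg φ)
  | and {φ ψ} : IsCO φ → IsCO ψ → IsCO (Fml.and φ ψ)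
  | or {φ ψ} : IsCO φ → IsCO ψ → IsCO (Fml.or φ ψ)
  | cf {φ} (I : List ((v : V) × Val v)) : IsCO φ → IsCO (Fml.cf I φ)

/-- CO⩗[σ]-formulas: additionally closed under ⩗; negation applies to CO-formulas only. -/
inductive IsCOV : Fml V Val → Prop where
  | eq (v : V) (x : Val v) : IsCOV (Fml.eq v x)
  | neg {φ} : IsCO φ → IsCOV (Fml.neg φ)
  | and {φ ψ} : IsCOV φ → IsCOV ψ → IsCOV (Fml.and φ ψ)
  | or {φ ψ} : IsCOV φ → IsCOV ψ → IsCOV (Fml.or φ ψ)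
  | ior {φ ψ} : IsCOV φ → IsCOV ψ → IsCOV (Fml.ior φ ψ)
  | cf {φ} (I : List ((v : V) × Val v)) : IsCOV φ → IsCOV (Fml.cf I φ)

/-- COD[σ]-formulas: additionally allow dependence atoms; negation applies to
CO-formulas only. -/
inductive IsCOD : Fml V Val → Prop where
  | eq (v : V) (x : Val v) : IsCOD (Fml.eq v x)
  | dep (X : List V) (Y : V) : IsCOD (Fml.dep X Y)
  | neg {φ} : IsCO φ → IsCOD (Fml.neg φ)
  | and {φ ψ} : IsCOD φ → IsCOD ψ → IsCOD (Fml.and φ ψ)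
  | or {φ ψ} : IsCOD φ → IsCOD ψ → IsCOD (Fml.or φ ψ)
  | cf {φ} (I : List ((v : V) × Val v)) : IsCOD φ → IsCOD (Fml.cf I φ)

/-- Satisfaction over causal teams `(Tm, F)` (the causal team semantics `⊨^c`). -/
def satC : Set (Asg V Val) → Sys V Val → Fml V Val → Prop
  | Tm, _, Fml.eq v x => ∀ s ∈ Tm, s v = x
  | Tm, _, Fml.dep X Y => ∀ s ∈ Tm, ∀ t ∈ Tm, (∀ w ∈ X, s w = t w) → s Y = t Y
  | Tm, F, Fml.neg φ => ∀ s ∈ Tm, ¬ satC {s} F φ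
  | Tm, F, Fml.and φ ψ => satC Tm F φ ∧ satC Tm F ψ
  | Tm, F, Fml.or φ ψ => ∃ T1 T2 : Set (Asg V Val), T1 ∪ T2 = Tm ∧ satC T1 F φ ∧ satC T2 F ψ
  | Tm, F, Fml.ior φ ψ => satC Tm F φ ∨ satC Tm F ψ
  | Tm, F, Fml.cf I φ => IConsistent I → satC (doAsg F I '' Tm) (doSys F I) φ

/-- Satisfaction over generalized causal teams (the semantics `⊨^g`). -/
def satG : Set (Asg V Val × Sys V Val) → Fml V Val → Prop
  | T, Fml.eq v x => ∀ p ∈ T, p.1 v = x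
  | T, Fml.dep X Y => ∀ p ∈ T, ∀ q ∈ T, (∀ w ∈ X, p.1 w = q.1 w) → p.1 Y = q.1 Y
  | T, Fml.neg φ => ∀ p ∈ T, ¬ satG {p} φ
  | T, Fml.and φ ψ => satG T φ ∧ satG T ψ
  | T, Fml.or φ ψ => ∃ T1 T2 : Set (Asg V Val × Sys V Val), T1 ∪ T2 = T ∧ satG T1 φ ∧ satG T2 ψ
  | T, Fml.ior φ ψ => satG T φ ∨ satG T ψ
  | T, Fml.cf I φ => IConsistent I →
      satG ((fun p : Asg V Val × Sys V Val => (doAsg p.2 I p.1, doSys p.2 I)) '' T) φ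

/-- A generalized causal team: a set of pairs `(s, F)` with `s` compatible with `F`. -/
def GTOk (T : Set (Asg V Val × Sys V Val)) : Prop := ∀ p ∈ T, Compat p.2 p.1

/-- The falsum `⊥`, an abbreviation for `X=x ∧ ¬(X=x)`. -/
def fBot : Fml V Val :=
  Fml.and (Fml.eq (Classical.arbitrary V) (Classical.arbitrary (Val (Classical.arbitrary V))))
    (Fml.neg (Fml.eq (Classical.arbitrary V) (Classical.arbitrary (Val (Classical.arbitrary V)))))

/-- A canonical tautology. -/
def fTop : Fml V Val := Fml.neg fBot

/-- Finite conjunction of a list of formulas. -/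
def bigAnd : List (Fml V Val) → Fml V Val
  | [] => fTop
  | [φ] => φ
  | φ :: ψ :: rest => Fml.and φ (bigAnd (ψ :: rest))

/-- Finite tensor disjunction of a list of formulas. -/
def bigOr : List (Fml V Val) → Fml V Val
  | [] => fBot
  | [φ] => φ
  | φ :: ψ :: rest => Fml.or φ (bigOr (ψ :: rest))

/-- Finite intuitionistic disjunction of a list of formulas. -/
def bigIor : List (Fml V Val) → Fml V Val
  | [] => fBot
  | [φ] => φ
  | φ :: ψ :: rest => Fml.ior φ (bigIor (ψ :: rest))

/-- The conjunction of equations describing the restriction of the assignment `t`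
to the set `S` of variables. -/
def eqList (S : Finset V) (t : Asg V Val) : List ((v : V) × Val v) :=
  S.toList.map (fun w => ⟨w, t w⟩)

/-- The list of all assignments over the signature. -/
def allAsg : List (Asg V Val) := (Finset.univ : Finset (Asg V Val)).toList

/-- `η(v)`: for every tuple of values for the variables other than `v`, intervening
with those values forces `v` to take the value computed by `F.fn v` from the parents. -/
def eta (F : Sys V Val) (v : V) : Fml V Val :=
  bigAnd (allAsg.map (fun t =>
    Fml.cf (eqList (Finset.univ.erase v) t) (Fml.eq v (F.fn v (fun w _ => t w)))))

/-- `ξ(v)`: the value of `v` is unaffected by interventions on all other variables. -/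
def xi (v : V) : Fml V Val :=
  bigAnd ((Finset.univ : Finset (Val v)).toList.map (fun x =>
    bigAnd (allAsg.map (fun t =>
      Fml.or (Fml.neg (Fml.eq v x))
        (Fml.cf (eqList (Finset.univ.erase v) t) (Fml.eq v x))))))

/-- `Cn(F)`: the endogenous variables of `F` governed by a constant function. -/
def Cn (F : Sys V Val) : Finset V :=
  F.En.filter (fun v => ∃ c : Val v, ∀ p, F.fn v p = c)

/-- The non-constant endogenous variables `En(F) ∖ Cn(F)`. -/
def strictEn (F : Sys V Val) : Finset V := F.En \ Cn F

/-- `F_v ∼ G_v`: equivalence of the two functions for `v` up to dummy arguments. -/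
def SimFn (F G : Sys V Val) (v : V) : Prop :=
  ∀ (x : (w : V) → w ∈ F.pa v ∩ G.pa v → Val w)
    (y : (w : V) → w ∈ F.pa v \ G.pa v → Val w)
    (z : (w : V) → w ∈ G.pa v \ F.pa v → Val w),
    F.fn v (fun w hw =>
      if h : w ∈ G.pa v then x w (Finset.mem_inter.mpr ⟨hw, h⟩)
      else y w (Finset.mem_sdiff.mpr ⟨hw, h⟩)) =
    G.fn v (fun w hw =>
      if h : w ∈ F.pa v then x w (Finset.mem_inter.mpr ⟨h, hw⟩)
      else z w (Finset.mem_sdiff.mpr ⟨hw, h⟩))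

/-- `F ∼ G`: equivalence of systems of functions up to dummy arguments. -/
def Sim (F G : Sys V Val) : Prop :=
  strictEn F = strictEn G ∧ ∀ v ∈ strictEn F, SimFn F G v

/-- The CO[σ]-formula `Φ^F` characterizing the function component `F` up to `∼`. -/
def Phi (F : Sys V Val) : Fml V Val :=
  Fml.and (bigAnd (F.En.toList.map (fun v => eta F v)))
    (bigAnd ((((Finset.univ : Finset V) \ F.En) ∪ Cn F).toList.map (fun v => xi v)))

/-- The CO[σ]-formula `Θ^A`: the team component is included in `A`. -/
def Theta (A : Finset (Asg V Val)) : Fml V Val :=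
  bigOr (A.toList.map (fun s =>
    bigAnd ((Finset.univ : Finset V).toList.map (fun v => Fml.eq v (s v)))))

/-- `χ₁`: all variables are constant in the team. -/
def chi1 : Fml V Val :=
  bigAnd ((Finset.univ : Finset V).toList.map (fun v => Fml.dep [] v))

/-- `χ_k`: the team has at most `k` elements. -/
def chi : ℕ → Fml V Val
  | 0 => fBot
  | 1 => chi1
  | (k+2) => Fml.or chi1 (chi (k+1))

def evalFn (F : Sys V Val) (v : V) (t : Asg V Val) : Val v := F.fn v fun w _ => t w

lemma evalFn_extend (F : Sys V Val) (v : V) (p : (w : V) → w ∈ F.pa v → Val w) :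
    evalFn F v (fun w => if hw : w ∈ F.pa v then p w hw else Classical.arbitrary _) =
      F.fn v p := by
  simp only [evalFn]
  congr 1
  funext w hw
  exact dif_pos hw

lemma mem_Cn_iff {F : Sys V Val} {v : V} :
    v ∈ Cn F ↔ v ∈ F.En ∧ ∃ c, ∀ t, evalFn F v t = c := by
  simp only [Cn, Finset.mem_filter]
  refine and_congr_right fun _ => exists_congr fun c => ⟨fun h t => h _, fun h p => ?_⟩
  rw [← evalFn_extend, h]

lemma simFn_iff {G F : Sys V Val} {v : V} :
    SimFn G F v ↔ ∀ t, evalFn G v t = evalFn F v t := by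
  refine ⟨fun h t => by simpa [evalFn] using h (fun w _ => t w) (fun w _ => t w) (fun w _ => t w),
    fun h x y z => ?_⟩
  let t : Asg V Val := fun w =>
    if h1 : w ∈ G.pa v ∩ F.pa v then x w h1
    else if h2 : w ∈ G.pa v \ F.pa v then y w h2
    else if h3 : w ∈ F.pa v \ G.pa v then z w h3
    else Classical.arbitrary _
  convert h t using 2 <;> simp only [evalFn] <;> congr 1 <;> funext w hw <;> split_ifs <;>
    simp_all [t]

lemma ilookup_map_mk (t : Asg V Val) (w : V) :
    ∀ l : List V, ilookup (l.map fun u => (⟨u, t u⟩ : (v : V) × Val v)) w =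
      if w ∈ l then some (t w) else none
  | [] => rfl
  | a :: l => by
    by_cases h : a = w
    · subst h
      simp [ilookup]
    · simp [ilookup, h, Ne.symm h, ilookup_map_mk t w l]

lemma ilookup_eqList (S : Finset V) (t : Asg V Val) (w : V) :
    ilookup (eqList S t) w = if w ∈ S then some (t w) else none := by
  simp [eqList, ilookup_map_mk]

lemma iConsistent_eqList (S : Finset V) (t : Asg V Val) : IConsistent (eqList S t) := by
  simp only [IConsistent, eqList, List.mem_map]
  rintro _ ⟨a, -, rfl⟩ _ ⟨b, -, rfl⟩ (rfl : a = b)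
  rfl

lemma doAsg_apply (F : Sys V Val) (I : List ((v : V) × Val v)) (s : Asg V Val) (v : V) :
    doAsg F I s v = match ilookup I v with
      | some x => x
      | none => if v ∈ F.En then F.fn v (fun w _ => doAsg F I s w) else s v := by
  rw [doAsg, WellFounded.fix_eq]
  rfl

/-- The value of `v` in `s_{𝐖_v = t}`, where `𝐖_v = t` sets every variable other than `v`
as in `t`. -/
def doOthers (G : Sys V Val) (v : V) (t s : Asg V Val) : Val v :=
  if v ∈ G.En then evalFn G v t else s v

lemma doAsg_eqList_erase_self (G : Sys V Val) (v : V) (t s : Asg V Val) :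
    doAsg G (eqList (Finset.univ.erase v) t) s v = doOthers G v t s := by
  rw [doAsg_apply, ilookup_eqList, if_neg (Finset.notMem_erase v _), doOthers, evalFn]
  dsimp only
  split_ifs with hv
  · congr 1
    funext w hw
    have hwv : w ≠ v := by
      rintro rfl
      exact G.recursive w (Relation.TransGen.single ⟨hv, hw⟩)
    simp [doAsg_apply, ilookup_eqList, hwv]
  · rfl

section Satisfaction

variable {X : Set (Asg V Val)} {G : Sys V Val}

lemma satC_and {φ ψ : Fml V Val} : satC X G (Fml.and φ ψ) ↔ satC X G φ ∧ satC X G ψ :=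
  Iff.rfl

lemma satC_eq {v : V} {x : Val v} : satC X G (Fml.eq v x) ↔ X ⊆ {s | s v = x} := Iff.rfl

lemma satC_neg_eq {v : V} {x : Val v} : satC X G (Fml.neg (Fml.eq v x)) ↔ X ⊆ {s | s v ≠ x} := by
  simp [satC, Set.subset_def]

lemma satC_fBot : satC X G fBot ↔ X ⊆ ∅ := by
  rw [fBot, satC_and, satC_eq, satC_neg_eq]
  exact ⟨fun ⟨h, h'⟩ s hs => h' hs (h hs), fun h => ⟨h.trans (Set.empty_subset _),
    h.trans (Set.empty_subset _)⟩⟩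

lemma satC_fTop : satC X G fTop := fun s _ h => by simpa using satC_fBot.mp h

lemma satC_bigAnd : ∀ {l : List (Fml V Val)}, satC X G (bigAnd l) ↔ ∀ φ ∈ l, satC X G φ
  | [] => by simpa [bigAnd] using satC_fTop
  | [φ] => by simp [bigAnd]
  | φ :: ψ :: l => by simp [bigAnd, satC_and, satC_bigAnd]

lemma satC_or_of_flat {φ ψ : Fml V Val} {A B : Set (Asg V Val)}
    (hφ : ∀ Y, satC Y G φ ↔ Y ⊆ A) (hψ : ∀ Y, satC Y G ψ ↔ Y ⊆ B) :
    satC X G (Fml.or φ ψ) ↔ X ⊆ A ∪ B := by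
  change (∃ Y Z, Y ∪ Z = X ∧ satC Y G φ ∧ satC Z G ψ) ↔ _
  simp only [hφ, hψ]
  refine ⟨fun ⟨Y, Z, hX, hY, hZ⟩ => hX ▸ Set.union_subset_union hY hZ, fun h => ?_⟩
  refine ⟨X ∩ A, X ∩ B, ?_, Set.inter_subset_right, Set.inter_subset_right⟩
  rw [← Set.inter_union_distrib_left, Set.inter_eq_left.mpr h]

def stateDesc (s : Asg V Val) : Fml V Val :=
  bigAnd ((Finset.univ : Finset V).toList.map fun v => Fml.eq v (s v))

lemma satC_stateDesc {s : Asg V Val} : satC X G (stateDesc s) ↔ X ⊆ {s} := by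
  simp only [stateDesc, satC_bigAnd, List.forall_mem_map, Finset.mem_toList, Finset.mem_univ,
    true_implies, satC_eq, Set.subset_def, Set.mem_ofPred_eq, Set.mem_singleton_iff, funext_iff]
  exact forall_comm.trans (forall_congr' fun _ => forall_comm)

lemma satC_bigOr_stateDesc :
    ∀ {l : List (Asg V Val)} {X : Set (Asg V Val)},
      satC X G (bigOr (l.map stateDesc)) ↔ X ⊆ {s | s ∈ l}
  | [], _ => by simp [bigOr, satC_fBot]
  | [s], _ => by simp [bigOr, satC_stateDesc]
  | s :: s' :: l, X => by
    change satC X G (Fml.or (stateDesc s) (bigOr ((s' :: l).map stateDesc))) ↔ _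
    rw [satC_or_of_flat (fun _ => satC_stateDesc) (fun _ => satC_bigOr_stateDesc)]
    congr! 1
    exact Set.ext fun _ => List.mem_cons.symm

lemma satC_Theta {Sm Tm : Finset (Asg V Val)} : satC (↑Sm) G (Theta Tm) ↔ Sm ⊆ Tm := by
  change satC _ G (bigOr (Tm.toList.map stateDesc)) ↔ _
  simp [satC_bigOr_stateDesc, Set.subset_def, Finset.subset_iff]

lemma satC_cf_eqList_erase {v : V} {t : Asg V Val} {x : Val v} :
    satC X G (Fml.cf (eqList (Finset.univ.erase v) t) (Fml.eq v x)) ↔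
      X ⊆ {s | doOthers G v t s = x} := by
  change (_ → ∀ s ∈ _ '' X, _) ↔ _
  simp only [iConsistent_eqList, true_implies, Set.forall_mem_image, doAsg_eqList_erase_self]
  rfl

lemma satC_eta {F : Sys V Val} {v : V} :
    satC X G (eta F v) ↔ ∀ t, X ⊆ {s | doOthers G v t s = evalFn F v t} := by
  simp only [eta, allAsg, satC_bigAnd, List.forall_mem_map, Finset.mem_toList, Finset.mem_univ,
    true_implies, satC_cf_eqList_erase]
  rfl

lemma satC_xi {v : V} : satC X G (xi v) ↔ ∀ t, X ⊆ {s | doOthers G v t s = s v} := by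
  simp only [xi, allAsg, satC_bigAnd, List.forall_mem_map, Finset.mem_toList, Finset.mem_univ,
    true_implies, satC_or_of_flat (fun _ => satC_neg_eq) (fun _ => satC_cf_eqList_erase)]
  refine ⟨fun h t s hs => (h (s v) t hs).resolve_left (not_not_intro rfl),
    fun h x t s hs => or_iff_not_imp_left.mpr fun hx => ?_⟩
  exact (h t hs).trans (not_not.mp hx)

/-- What `Φ^F` demands of the variable `v` at the assignment `s`: its `η`-conjunct when
`v ∈ En(F)` and its `ξ`-conjunct when `v ∈ (Dom ∖ En(F)) ∪ Cn(F)`. -/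
def PhiAt (G F : Sys V Val) (v : V) (s : Asg V Val) : Prop :=
  (v ∈ F.En → ∀ t, doOthers G v t s = evalFn F v t) ∧
    (v ∉ strictEn F → ∀ t, doOthers G v t s = s v)

lemma mem_compl_En_union_Cn {F : Sys V Val} {v : V} :
    v ∈ (Finset.univ \ F.En) ∪ Cn F ↔ v ∉ strictEn F := by
  simp only [Finset.mem_union, Finset.mem_sdiff, Finset.mem_univ, true_and, strictEn]
  tauto

lemma satC_Phi {F : Sys V Val} : satC X G (Phi F) ↔ ∀ s ∈ X, ∀ v, PhiAt G F v s := by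
  simp only [Phi, satC_and, satC_bigAnd, List.forall_mem_map, Finset.mem_toList, satC_eta,
    satC_xi, mem_compl_En_union_Cn, Set.subset_def, Set.mem_ofPred_eq, PhiAt]
  exact ⟨fun h s hs v => ⟨fun hv t => h.1 v hv t s hs, fun hv t => h.2 v hv t s hs⟩,
    fun h => ⟨fun v hv t s hs => (h s hs v).1 hv t, fun v hv t s hs => (h s hs v).2 hv t⟩⟩

end Satisfaction

section Equivalence

variable {G F : Sys V Val} {v : V} {s : Asg V Val}

def SimAt (G F : Sys V Val) (v : V) : Prop :=
  (v ∈ strictEn G ↔ v ∈ strictEn F) ∧ (v ∈ strictEn G → ∀ t, evalFn G v t = evalFn F v t)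

lemma sim_iff_forall_simAt : Sim G F ↔ ∀ v, SimAt G F v := by
  simp only [Sim, SimAt, Finset.ext_iff, simFn_iff, forall_and]

lemma forall_evalFn_eq_iff_mem_Cn (hs : Compat F s) (hv : v ∈ F.En) :
    (∀ t, evalFn F v t = s v) ↔ v ∈ Cn F := by
  refine ⟨fun h => mem_Cn_iff.mpr ⟨hv, s v, h⟩, fun h t => ?_⟩
  obtain ⟨-, c, hc⟩ := mem_Cn_iff.mp h
  rw [hc, hs v hv, ← evalFn, hc]

lemma forall_doOthers_eq_iff_notMem_strictEn (hs : Compat G s) :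
    (∀ t, doOthers G v t s = s v) ↔ v ∉ strictEn G := by
  by_cases hv : v ∈ G.En
  · simp only [doOthers, strictEn, Finset.mem_sdiff, hv, true_and, not_not]
    exact forall_evalFn_eq_iff_mem_Cn hs hv
  · simp [doOthers, hv, strictEn]

lemma phiAt_iff_simAt (hG : Compat G s) (hF : Compat F s) : PhiAt G F v s ↔ SimAt G F v := by
  have hG' := forall_doOthers_eq_iff_notMem_strictEn (v := v) hG
  constructor
  · rintro ⟨hEn, hCn⟩
    by_cases hvF : v ∈ strictEn F
    · have hvEn : v ∈ F.En := (Finset.mem_sdiff.mp hvF).1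
      have hvG : v ∈ strictEn G := by
        refine not_not.mp fun hvG => (Finset.mem_sdiff.mp hvF).2 ?_
        rw [← forall_evalFn_eq_iff_mem_Cn hF hvEn]
        exact fun t => (hEn hvEn t).symm.trans (hG'.mpr hvG t)
      refine ⟨iff_of_true hvG hvF, fun _ t => ?_⟩
      rw [← hEn hvEn t, doOthers, if_pos (Finset.mem_sdiff.mp hvG).1]
    · exact ⟨iff_of_false (hG'.mp (hCn hvF)) hvF, fun hvG => absurd hvG (hG'.mp (hCn hvF))⟩
  · rintro ⟨hiff, hfn⟩
    refine ⟨fun hvEn t => ?_, fun hvF => hG'.mpr (mt hiff.mp hvF)⟩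
    by_cases hvF : v ∈ strictEn F
    · rw [doOthers, if_pos (Finset.mem_sdiff.mp (hiff.mpr hvF)).1, hfn (hiff.mpr hvF)]
    · have hvCn : v ∈ Cn F := by
        simpa [strictEn, hvEn] using hvF
      rw [hG'.mpr (mt hiff.mp hvF), (forall_evalFn_eq_iff_mem_Cn hF hvEn).mpr hvCn]

lemma satC_Phi_iff_sim {X : Set (Asg V Val)} (hG : ∀ s ∈ X, Compat G s)
    (hF : ∀ s ∈ X, Compat F s) (hX : X.Nonempty) : satC X G (Phi F) ↔ Sim G F := by
  rw [satC_Phi, sim_iff_forall_simAt]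
  obtain ⟨s₀, hs₀⟩ := hX
  exact ⟨fun h v => (phiAt_iff_simAt (hG s₀ hs₀) (hF s₀ hs₀)).mp (h s₀ hs₀ v),
    fun h s hs v => (phiAt_iff_simAt (hG s hs) (hF s hs)).mpr (h v)⟩

end Equivalence

end CausalTeam

open CausalTeam

theorem Theta_and_Phi_characterization_general {V : Type} [Fintype V] [DecidableEq V] [Nonempty V]
    {Val : V → Type} [∀ v, Fintype (Val v)] [∀ v, DecidableEq (Val v)] [∀ v, Nonempty (Val v)]
    (Sm Tm : Finset (Asg V Val)) (G F : Sys V Val)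
    (hS : ∀ s ∈ Sm, Compat G s) (hT : ∀ s ∈ Tm, Compat F s)
    (hSne : Sm.Nonempty) :
    satC (↑Sm : Set (Asg V Val)) G (Fml.and (Theta Tm) (Phi F)) ↔
      ∃ (Rm : Finset (Asg V Val)) (FR : Sys V Val), (∀ s ∈ Rm, Compat FR s) ∧
        (Sm = Rm ∧ Sim G FR) ∧ (FR = F ∧ Rm ⊆ Tm) := by
  rw [satC_and, satC_Theta]
  constructor
  · rintro ⟨hsub, hPhi⟩
    have hF : ∀ s ∈ Sm, Compat F s := fun s hs => hT s (hsub hs)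
    exact ⟨Sm, F, hF, ⟨rfl, (satC_Phi_iff_sim hS hF hSne.to_set).mp hPhi⟩, rfl, hsub⟩
  · rintro ⟨Rm, FR, hR, ⟨rfl, hsim⟩, rfl, hsub⟩
    exact ⟨hsub, (satC_Phi_iff_sim hS hR hSne.to_set).mpr hsim⟩

/-- For nonempty recursive causal teams `S = (Sm, G)` and `T = (Tm, F)`:
`S ⊨ Θ^T ∧ Φ^F` iff `S ≈ R ⊆ T` for some causal team `R`. -/
theorem Theta_and_Phi_characterization {V : Type} [Fintype V] [DecidableEq V] [Nonempty V]
    {Val : V → Type} [∀ v, Fintype (Val v)] [∀ v, DecidableEq (Val v)] [∀ v, Nonempty (Val v)]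
    (Sm Tm : Finset (Asg V Val)) (G F : Sys V Val)
    (hS : ∀ s ∈ Sm, Compat G s) (hT : ∀ s ∈ Tm, Compat F s)
    (hSne : Sm.Nonempty) (hTne : Tm.Nonempty) :
    satC (↑Sm : Set (Asg V Val)) G (Fml.and (Theta Tm) (Phi F)) ↔
      ∃ (Rm : Finset (Asg V Val)) (FR : Sys V Val), (∀ s ∈ Rm, Compat FR s) ∧
        (Sm = Rm ∧ Sim G FR) ∧ (FR = F ∧ Rm ⊆ Tm) :=
  Theta_and_Phi_characterization_general Sm Tm G F hS hT hSne
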